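/- Let n ≥ 2 and S a semiring. There exist a semiring R and a left R-semimodule M such that the semiring End(_R M) of R-endomorphisms of M is isomorphic to M_n(S) if and only if S has a zero and a unity. -/

import Mathlib

/-!
The identity endomorphism becomes a unity `U` of `M_N(S)`. Multiplying `U` with constant
matrices shows that the sum of row `0` of `U`, which equals the sum of its column `0`, is a unity
of `S`. For `N ≥ 2`, multiplying `U` with the matrix that is `x` on its last row and `y` elsewhere
gives `b * y + p * x = y` for `p = U 0 last`, so every `p * x` is additively neutral
(`a + p * x = b * a + p * (x + x) = a`); symmetrically every `y * q` with `q = U last 0` is, and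
then `p * q` is a zero of `S`.

Conversely, given a zero and a unity, the right `S`-semimodule `S^N` has a standard basis, and
expanding endomorphisms in it identifies them with matrices, as over a ring.
-/

/-- A semiring in the sense of the paper: associative `+` and `*`, `+` commutative,
`*` distributing over `+` from both sides; no zero or unity assumed. -/
class PSemiring (S : Type) extends AddCommSemigroup S, Semigroup S where
  left_distrib : ∀ a b c : S, a * (b + c) = a * b + a * c
  right_distrib : ∀ a b c : S, (a + b) * c = a * c + b * c

section Defs
variable {T : Type} [Add T] [Mul T]

def MulAbsorbing (w : T) : Prop := ∀ a : T, a * w = w ∧ w * a = w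
def AddAbsorbing (w : T) : Prop := ∀ a : T, a + w = w
def AddNeutral (w : T) : Prop := ∀ a : T, a + w = a
def BiAbsorbing (w : T) : Prop := MulAbsorbing w ∧ AddAbsorbing w
def IsZero (w : T) : Prop := MulAbsorbing w ∧ AddNeutral w
def IsUnity (w : T) : Prop := ∀ a : T, w * a = a ∧ a * w = a

def IsBiIdeal (I : Set T) : Prop :=
  I.Nonempty ∧ ∀ a ∈ I, ∀ s : T, a + s ∈ I ∧ a * s ∈ I ∧ s * a ∈ I

def IsCongruence (r : T → T → Prop) : Prop :=
  Equivalence r ∧ (∀ a b c d : T, r a b → r c d → r (a + c) (b + d)) ∧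
    (∀ a b c d : T, r a b → r c d → r (a * c) (b * d))

/-- The standard quasiordering on a semiring. -/
def leS (a b : T) : Prop := a = b ∨ ∃ c : T, a + c = b

/-- `addPow m b` is the `(m+1)`-fold sum `b + ⋯ + b`. -/
def addPow : ℕ → T → T
  | 0, b => b
  | m + 1, b => addPow m b + b

end Defs

def CongSimple (T : Type) [Add T] [Mul T] : Prop :=
  (∃ a b : T, a ≠ b) ∧
    ∀ r : T → T → Prop, IsCongruence r →
      (∀ a b : T, r a b ↔ a = b) ∨ (∀ a b : T, r a b)

def BiIdealSimple (T : Type) [Add T] [Mul T] : Prop :=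
  (∃ a b : T, a ≠ b) ∧
    ∀ I : Set T, IsBiIdeal I → (∃ w : T, I = {w}) ∨ I = Set.univ

def BiIdealFree (T : Type) [Add T] [Mul T] : Prop :=
  (∃ a b : T, a ≠ b) ∧ ∀ I : Set T, IsBiIdeal I → I = Set.univ

/-- Sum of a nonempty family indexed by `Fin (n+1)`. -/
def finSum {S : Type} [Add S] : ∀ {n : ℕ}, (Fin (n + 1) → S) → S
  | 0, f => f 0
  | n + 1, f => finSum (fun i : Fin (n + 1) => f i.castSucc) + f (Fin.last (n + 1))

/-- `Mat n S` is the semiring of `(n+1) × (n+1)` matrices over `S`. -/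
structure Mat (n : ℕ) (S : Type) where
  entry : Fin (n + 1) → Fin (n + 1) → S

instance {n : ℕ} {S : Type} [Add S] : Add (Mat n S) :=
  ⟨fun A B => ⟨fun i j => A.entry i j + B.entry i j⟩⟩

instance {n : ℕ} {S : Type} [Add S] [Mul S] : Mul (Mat n S) :=
  ⟨fun A B => ⟨fun i j => finSum (fun k => A.entry i k * B.entry k j)⟩⟩

/-- The constant matrix `ā`. -/
def Mat.const (n : ℕ) {S : Type} (a : S) : Mat n S := ⟨fun _ _ => a⟩

/-- A semiring `R` together with a left `R`-semimodule `M` (all operations raw). -/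
structure SMod where
  R : Type
  addR : R → R → R
  mulR : R → R → R
  addR_comm : ∀ a b, addR a b = addR b a
  addR_assoc : ∀ a b c, addR (addR a b) c = addR a (addR b c)
  mulR_assoc : ∀ a b c, mulR (mulR a b) c = mulR a (mulR b c)
  left_distribR : ∀ a b c, mulR a (addR b c) = addR (mulR a b) (mulR a c)
  right_distribR : ∀ a b c, mulR (addR a b) c = addR (mulR a c) (mulR b c)
  M : Type
  addM : M → M → M
  addM_comm : ∀ a b, addM a b = addM b a
  addM_assoc : ∀ a b c, addM (addM a b) c = addM a (addM b c)
  smul : R → M → M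
  smul_addM : ∀ r m m', smul r (addM m m') = addM (smul r m) (smul r m')
  addR_smul : ∀ r r' m, smul (addR r r') m = addM (smul r m) (smul r' m)
  mulR_smul : ∀ r r' m, smul (mulR r r') m = smul r (smul r' m)

lemma SMod.addM_addM_comm (D : SMod) (a b c d : D.M) :
    D.addM (D.addM a b) (D.addM c d) = D.addM (D.addM a c) (D.addM b d) := by
  rw [D.addM_assoc, ← D.addM_assoc b c d, D.addM_comm b c, D.addM_assoc c b d,
    ← D.addM_assoc]

/-- `R`-endomorphisms of the semimodule `M`. -/
def REnd (D : SMod) : Type :=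
  {φ : D.M → D.M // (∀ m m', φ (D.addM m m') = D.addM (φ m) (φ m')) ∧
    ∀ r m, φ (D.smul r m) = D.smul r (φ m)}

/-- Pointwise addition on `REnd D`. -/
def REnd.add {D : SMod} (φ ψ : REnd D) : REnd D :=
  ⟨fun m => D.addM (φ.1 m) (ψ.1 m), by
    refine ⟨fun m m' => ?_, fun r m => ?_⟩
    · dsimp only
      rw [φ.2.1, ψ.2.1, D.addM_addM_comm]
    · dsimp only
      rw [φ.2.2, ψ.2.2, D.smul_addM]⟩

/-- Composition on `REnd D`. -/
def REnd.comp {D : SMod} (φ ψ : REnd D) : REnd D :=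
  ⟨fun m => φ.1 (ψ.1 m), by
    refine ⟨fun m m' => ?_, fun r m => ?_⟩
    · dsimp only
      rw [ψ.2.1, φ.2.1]
    · dsimp only
      rw [ψ.2.2, φ.2.2]⟩

section Neutral
variable {S : Type} [PSemiring S]

theorem AddNeutral.unique {c d : S} (hc : AddNeutral c) (hd : AddNeutral d) : c = d :=
  (hd c).symm.trans ((add_comm c d).trans (hc d))

theorem addNeutral_mul_left_of_forall {b p : S} (h : ∀ x y, b * y + p * x = y) (x : S) :
    AddNeutral (p * x) := fun a =>
  calc a + p * x = b * a + p * x + p * x := by rw [h x a]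
    _ = b * a + p * (x + x) := by rw [add_assoc, PSemiring.left_distrib]
    _ = a := h (x + x) a

theorem addNeutral_mul_right_of_forall {b q : S} (h : ∀ x y, y * b + x * q = y) (x : S) :
    AddNeutral (x * q) := fun a =>
  calc a + x * q = a * b + x * q + x * q := by rw [h x a]
    _ = a * b + (x + x) * q := by rw [add_assoc, PSemiring.right_distrib]
    _ = a := h (x + x) a

theorem isZero_mul_of_addNeutral {p q : S} (hp : ∀ x, AddNeutral (p * x))
    (hq : ∀ y, AddNeutral (y * q)) : IsZero (p * q) :=
  ⟨fun a => ⟨(mul_assoc a p q ▸ hq (a * p)).unique (hp q),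
      (mul_assoc p q a ▸ hp (q * a)).unique (hp q)⟩, hp q⟩

end Neutral

section FinSum
variable {S : Type} [PSemiring S]

theorem finSum_succ {m : ℕ} (f : Fin (m + 2) → S) :
    finSum f = finSum (fun i : Fin (m + 1) => f i.castSucc) + f (Fin.last (m + 1)) := rfl

theorem finSum_mul {m : ℕ} (f : Fin (m + 1) → S) (a : S) :
    finSum f * a = finSum fun l => f l * a := by
  induction m with
  | zero => rfl
  | succ m ih => rw [finSum_succ, finSum_succ, PSemiring.right_distrib, ih]

theorem mul_finSum {m : ℕ} (f : Fin (m + 1) → S) (a : S) :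
    a * finSum f = finSum fun l => a * f l := by
  induction m with
  | zero => rfl
  | succ m ih => rw [finSum_succ, finSum_succ, PSemiring.left_distrib, ih]

theorem finSum_add_distrib {m : ℕ} (f g : Fin (m + 1) → S) :
    (finSum fun l => f l + g l) = finSum f + finSum g := by
  induction m with
  | zero => rfl
  | succ m ih => rw [finSum_succ, finSum_succ f, finSum_succ g, ih, add_add_add_comm]

theorem addNeutral_finSum {m : ℕ} {f : Fin (m + 1) → S} (h : ∀ l, AddNeutral (f l)) :
    AddNeutral (finSum f) := by
  induction m with
  | zero => exact h 0
  | succ m ih => intro a; rw [finSum_succ, ← add_assoc, ih fun l => h _, h]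

theorem finSum_eq_single {m : ℕ} (f : Fin (m + 1) → S) (j : Fin (m + 1))
    (h : ∀ l, l ≠ j → AddNeutral (f l)) : finSum f = f j := by
  induction m with
  | zero => rw [Fin.fin_one_eq_zero j]; rfl
  | succ m ih =>
    rw [finSum_succ]
    rcases Fin.eq_castSucc_or_eq_last j with ⟨j, rfl⟩ | rfl
    · rw [ih _ j fun l hl => h _ ((Fin.castSucc_injective _).ne hl),
        h _ (Fin.castSucc_ne_last j).symm]
    · rw [add_comm, addNeutral_finSum fun l => h _ (Fin.castSucc_ne_last l)]

end FinSum

theorem Mat.ext {k : ℕ} {S : Type} {X Y : Mat k S} (h : ∀ i j, X.entry i j = Y.entry i j) :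
    X = Y := by
  cases X; cases Y; exact congrArg Mat.mk (funext₂ h)

section MatUnity
variable {S : Type} [PSemiring S] {k : ℕ} {U : Mat k S}

theorem IsUnity.finSum_entry_mul (hU : IsUnity U) (a : Fin (k + 1) → S) (i : Fin (k + 1)) :
    (finSum fun l => U.entry i l * a l) = a i :=
  congrFun (congrFun (congrArg Mat.entry (hU ⟨fun l _ => a l⟩).1) i) 0

theorem IsUnity.finSum_mul_entry (hU : IsUnity U) (a : Fin (k + 1) → S) (j : Fin (k + 1)) :
    (finSum fun l => a l * U.entry l j) = a j :=
  congrFun (congrFun (congrArg Mat.entry (hU ⟨fun _ l => a l⟩).2) 0) j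

theorem Mat.exists_isUnity_of_isUnity (hU : IsUnity U) : ∃ e : S, IsUnity e := by
  have hleft (c : S) : finSum (fun l => U.entry 0 l) * c = c := by
    rw [finSum_mul]; exact hU.finSum_entry_mul (fun _ => c) 0
  have hright (c : S) : c * finSum (fun l => U.entry l 0) = c := by
    rw [mul_finSum]; exact hU.finSum_mul_entry (fun _ => c) 0
  have hrow_col : finSum (fun l => U.entry 0 l) = finSum (fun l => U.entry l 0) :=
    (hright _).symm.trans (hleft _)
  exact ⟨_, fun c => ⟨hleft c, hrow_col ▸ hright c⟩⟩

theorem Mat.exists_isZero_of_isUnity {U : Mat (k + 1) S} (hU : IsUnity U) :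
    ∃ z : S, IsZero z := by
  let v (x y : S) : Fin (k + 2) → S := Fin.lastCases x fun _ => y
  have hrow (x y : S) : finSum (fun l : Fin (k + 1) => U.entry (Fin.castSucc 0) l.castSucc) * y
      + U.entry (Fin.castSucc 0) (Fin.last (k + 1)) * x = y := by
    simpa only [finSum_succ, v, Fin.lastCases_castSucc, Fin.lastCases_last, finSum_mul]
      using hU.finSum_entry_mul (v x y) (Fin.castSucc 0)
  have hcol (x y : S) : y * finSum (fun l : Fin (k + 1) => U.entry l.castSucc (Fin.castSucc 0))
      + x * U.entry (Fin.last (k + 1)) (Fin.castSucc 0) = y := by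
    simpa only [finSum_succ, v, Fin.lastCases_castSucc, Fin.lastCases_last, mul_finSum]
      using hU.finSum_mul_entry (v x y) (Fin.castSucc 0)
  exact ⟨_, isZero_mul_of_addNeutral (addNeutral_mul_left_of_forall hrow)
    (addNeutral_mul_right_of_forall hcol)⟩

end MatUnity

def REnd.id (D : SMod) : REnd D := ⟨fun m => m, fun _ _ => rfl, fun _ _ => rfl⟩

section ColumnModule
variable {S : Type} [PSemiring S] {k : ℕ}

/-- `S^(k+1)` with `S` acting on the right, i.e. as a left `Sᵐᵒᵖ`-semimodule. -/
abbrev colSMod (S : Type) [PSemiring S] (k : ℕ) : SMod where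
  R := S
  addR a b := a + b
  mulR a b := b * a
  addR_comm := add_comm
  addR_assoc := add_assoc
  mulR_assoc a b c := (mul_assoc c b a).symm
  left_distribR a b c := PSemiring.right_distrib b c a
  right_distribR a b c := PSemiring.left_distrib c a b
  M := Fin (k + 1) → S
  addM f g i := f i + g i
  addM_comm _ _ := funext fun _ => add_comm _ _
  addM_assoc _ _ _ := funext fun _ => add_assoc _ _ _
  smul r m i := m i * r
  smul_addM _ _ _ := funext fun _ => PSemiring.right_distrib _ _ _
  addR_smul _ _ _ := funext fun _ => PSemiring.left_distrib _ _ _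
  mulR_smul _ _ _ := funext fun _ => (mul_assoc _ _ _).symm

def basisVec (z e : S) (j : Fin (k + 1)) : Fin (k + 1) → S :=
  fun l => if l = j then e else z

variable {z e : S}

theorem finSum_basisVec_mul (hz : IsZero z) (he : IsUnity e) (m : Fin (k + 1) → S)
    (i : Fin (k + 1)) : (finSum fun l => basisVec z e l i * m l) = m i := by
  rw [finSum_eq_single _ i fun l hl => by
    simpa only [basisVec, if_neg (Ne.symm hl), (hz.1 (m l)).2] using hz.2]
  simpa only [basisVec, if_pos] using (he (m i)).1

theorem finSum_mul_basisVec (hz : IsZero z) (he : IsUnity e) (a : Fin (k + 1) → S)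
    (j : Fin (k + 1)) : (finSum fun l => a l * basisVec z e j l) = a j := by
  rw [finSum_eq_single _ j fun l hl => by
    simpa only [basisVec, if_neg hl, (hz.1 (a l)).1] using hz.2]
  simpa only [basisVec, if_pos] using (he (a j)).2

theorem REnd.apply_finSum (φ : REnd (colSMod S k)) {m : ℕ}
    (v : Fin (m + 1) → Fin (k + 1) → S) :
    φ.1 (fun i => finSum fun l => v l i) = fun i => finSum fun l => φ.1 (v l) i := by
  induction m with
  | zero => rfl
  | succ m ih => exact (φ.2.1 _ (v (Fin.last _))).trans (by rw [ih]; rfl)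

theorem REnd.apply_eq_finSum (hz : IsZero z) (he : IsUnity e) (φ : REnd (colSMod S k))
    (m : Fin (k + 1) → S) (i : Fin (k + 1)) :
    φ.1 m i = finSum fun l => φ.1 (basisVec z e l) i * m l := by
  calc φ.1 m i
      = φ.1 (fun i => finSum fun l => (colSMod S k).smul (m l) (basisVec z e l) i) i :=
        congrArg (φ.1 · i) (funext fun i => (finSum_basisVec_mul hz he m i).symm)
    _ = finSum fun l => φ.1 ((colSMod S k).smul (m l) (basisVec z e l)) i :=
        congrFun (φ.apply_finSum _) i
    _ = finSum fun l => φ.1 (basisVec z e l) i * m l := by simp only [φ.2.2]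

def Mat.toREnd (A : Mat k S) : REnd (colSMod S k) :=
  ⟨fun m i => finSum fun l => A.entry i l * m l,
    fun m m' => funext fun i => by
      simp only [PSemiring.left_distrib]; exact finSum_add_distrib _ _,
    fun r m => funext fun i => by
      simp only [← mul_assoc]; exact (finSum_mul _ r).symm⟩

def REnd.equivMat (hz : IsZero z) (he : IsUnity e) : REnd (colSMod S k) ≃ Mat k S where
  toFun φ := ⟨fun i j => φ.1 (basisVec z e j) i⟩
  invFun := Mat.toREnd
  left_inv φ := Subtype.ext <| funext₂ fun m i => (φ.apply_eq_finSum hz he m i).symm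
  right_inv A := Mat.ext fun i j => finSum_mul_basisVec hz he (A.entry i) j

theorem REnd.equivMat_add (hz : IsZero z) (he : IsUnity e) (φ ψ : REnd (colSMod S k)) :
    equivMat hz he (φ.add ψ) = equivMat hz he φ + equivMat hz he ψ :=
  rfl

theorem REnd.equivMat_comp (hz : IsZero z) (he : IsUnity e) (φ ψ : REnd (colSMod S k)) :
    equivMat hz he (φ.comp ψ) = equivMat hz he φ * equivMat hz he ψ :=
  Mat.ext fun i j => φ.apply_eq_finSum hz he (ψ.1 (basisVec z e j)) i

end ColumnModule

/-- for `n ≥ 2` (`Mat (n+1)` has size `n+2`), there exist a semiring `R`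
and a left `R`-semimodule `M` with `End(_R M) ≅ M_n(S)` iff `S` has a zero and a unity. -/
theorem stmt5 {S : Type} [PSemiring S] (n : ℕ) :
    (∃ (D : SMod) (f : REnd D ≃ Mat (n + 1) S),
        (∀ x y : REnd D, f (x.add y) = f x + f y) ∧
        (∀ x y : REnd D, f (x.comp y) = f x * f y)) ↔
      ((∃ z : S, IsZero z) ∧ ∃ e : S, IsUnity e) := by
  constructor
  · rintro ⟨D, f, -, hmul⟩
    have hU : IsUnity (f (REnd.id D)) := fun X => by
      obtain ⟨φ, rfl⟩ := f.surjective X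
      exact ⟨(hmul _ φ).symm, (hmul φ _).symm⟩
    exact ⟨Mat.exists_isZero_of_isUnity hU, Mat.exists_isUnity_of_isUnity hU⟩
  · rintro ⟨⟨z, hz⟩, ⟨e, he⟩⟩
    exact ⟨colSMod S (n + 1), REnd.equivMat hz he, REnd.equivMat_add hz he,
      REnd.equivMat_comp hz he⟩
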